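/- Let c ≥ 0 and let r₂, r₃ be real numbers with r₂² + r₃ > 0. Then ∫₀^∞ y^{-2} e^{-π (c y + r₂ y⁻¹)² - π r₃ y⁻²} dy = (1/2) (r₂² + r₃)^{-1/2} e^{-2π c ((r₂² + r₃)^{1/2} + r₂)}. -/

import Mathlib

/-!
Substituting `y = 1 / u` and completing the square turns the exponent into
`-2πc(s + r₂) - π(su - c/u)²` with `s = √(r₂² + r₃)`. The remaining integral is a
Cauchy–Schlömilch transformation: `u ↦ su - c/u` maps `(0, ∞)` onto `ℝ` with derivative
`s + c/u²`, and the substitution `u ↦ c/(su)`, which flips the sign of `su - c/u`, turns the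
`c/u²` part into `s` times the integral itself. Hence `∫₀^∞ g(su - c/u) du = (2s)⁻¹ ∫ g` for every
even integrable `g`, and the Gaussian integral `∫ exp(-πx²) = 1` finishes the computation.
-/

open MeasureTheory Real Set

theorem image_mul_sub_mul_inv_Ioi {s c : ℝ} (hs : 0 < s) (hc : 0 < c) :
    (fun u => s * u - c * u⁻¹) '' Ioi 0 = univ := by
  refine eq_univ_of_forall fun v => ?_
  set d := √(v ^ 2 + 4 * s * c)
  have hd : d ^ 2 = v ^ 2 + 4 * s * c := sq_sqrt (by positivity)
  have hvd : 0 < v + d := by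
    have : |v| < d := by
      rw [← sqrt_sq_eq_abs]; exact sqrt_lt_sqrt (sq_nonneg v) (by nlinarith)
    linarith [neg_le_abs v]
  refine ⟨(v + d) / (2 * s), mem_Ioi.2 (by positivity), ?_⟩
  field_simp
  linear_combination hd

theorem strictMonoOn_mul_sub_mul_inv {s c : ℝ} (hs : 0 < s) (hc : 0 ≤ c) :
    StrictMonoOn (fun u => s * u - c * u⁻¹) (Ioi 0) := by
  intro x hx y hy hxy
  have : c * y⁻¹ ≤ c * x⁻¹ := mul_le_mul_of_nonneg_left ((inv_le_inv₀ hy hx).2 hxy.le) hc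
  dsimp only
  nlinarith

section

variable {E : Type*} [NormedAddCommGroup E] [NormedSpace ℝ E]

theorem integral_Ioi_comp_div (g : ℝ → E) {a : ℝ} (ha : 0 < a) :
    ∫ x in Ioi 0, (a / x ^ 2) • g (a / x) = ∫ x in Ioi 0, g x := by
  have hderiv : ∀ x ∈ Ioi (0 : ℝ), HasDerivWithinAt (a / ·) (-(a / x ^ 2)) (Ioi 0) x := by
    intro x hx
    simpa [div_eq_mul_inv] using ((hasDerivAt_inv (ne_of_gt hx)).const_mul a).hasDerivWithinAt
  have hinj : InjOn (a / ·) (Ioi (0 : ℝ)) := fun x _ y _ h =>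
    inv_injective (mul_left_cancel₀ ha.ne' h)
  have himage : (a / ·) '' Ioi (0 : ℝ) = Ioi 0 := by
    refine Subset.antisymm (image_subset_iff.2 fun x hx => div_pos ha hx) fun x hx => ?_
    exact ⟨a / x, div_pos ha hx, div_div_cancel₀ ha.ne'⟩
  have hsubst := integral_image_eq_integral_abs_deriv_smul measurableSet_Ioi hderiv hinj g
  rw [himage] at hsubst
  rw [hsubst]
  refine setIntegral_congr_fun measurableSet_Ioi fun x hx => ?_
  rw [abs_neg, abs_of_pos (div_pos ha (pow_pos hx 2))]

theorem integral_eq_two_smul_integral_Ioi_of_even {g : ℝ → E} (hg : Integrable g)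
    (heven : ∀ x, g (-x) = g x) : ∫ x, g x = (2 : ℝ) • ∫ x in Ioi 0, g x := by
  rw [← intervalIntegral.integral_Iic_add_Ioi hg.integrableOn hg.integrableOn, two_smul]
  congr 1
  simpa [heven] using (integral_comp_neg_Ioi 0 g).symm

theorem integral_Ioi_div_sq_smul_comp_mul_sub_mul_inv {g : ℝ → E} (heven : ∀ x, g (-x) = g x)
    {s c : ℝ} (hs : 0 < s) (hc : 0 < c) :
    ∫ u in Ioi 0, (c / u ^ 2) • g (s * u - c * u⁻¹) =
      s • ∫ u in Ioi 0, g (s * u - c * u⁻¹) := by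
  rw [← integral_Ioi_comp_div _ (div_pos hc hs), ← integral_smul]
  refine setIntegral_congr_fun measurableSet_Ioi fun u hu => ?_
  have hu : u ≠ 0 := ne_of_gt hu
  have harg : s * (c / s / u) - c * (c / s / u)⁻¹ = -(s * u - c * u⁻¹) := by
    field_simp
    ring
  have hcoef : c / s / u ^ 2 * (c / (c / s / u) ^ 2) = s := by
    field_simp
  rw [smul_smul, hcoef, harg, heven]

theorem integral_Ioi_comp_mul_sub_mul_inv {g : ℝ → E} (hg : Integrable g)
    (heven : ∀ x, g (-x) = g x) {s c : ℝ} (hs : 0 < s) (hc : 0 ≤ c) :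
    ∫ u in Ioi 0, g (s * u - c * u⁻¹) = (2 * s)⁻¹ • ∫ x, g x := by
  rcases hc.eq_or_lt with rfl | hc
  · rw [integral_eq_two_smul_integral_Ioi_of_even hg heven, smul_smul, mul_inv_rev,
      inv_mul_cancel_right₀ two_ne_zero]
    simpa using integral_comp_mul_left_Ioi g 0 hs
  have hderiv : ∀ u ∈ Ioi (0 : ℝ),
      HasDerivWithinAt (fun u => s * u - c * u⁻¹) (s + c / u ^ 2) (Ioi 0) u := by
    intro u hu
    exact (((hasDerivAt_id' u).const_mul s).sub ((hasDerivAt_inv (ne_of_gt hu)).const_mul c)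
      ).hasDerivWithinAt.congr_deriv (by ring)
  have hinj := (strictMonoOn_mul_sub_mul_inv hs hc.le).injOn
  have himage := image_mul_sub_mul_inv_Ioi hs hc
  have hsubst : ∫ x, g x = ∫ u in Ioi 0, |s + c / u ^ 2| • g (s * u - c * u⁻¹) := by
    rw [← setIntegral_univ, ← himage,
      integral_image_eq_integral_abs_deriv_smul measurableSet_Ioi hderiv hinj]
  have hint : IntegrableOn (fun u => |s + c / u ^ 2| • g (s * u - c * u⁻¹)) (Ioi 0) := by
    rw [← integrableOn_image_iff_integrableOn_abs_deriv_smul measurableSet_Ioi hderiv hinj,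
      himage, integrableOn_univ]
    exact hg
  have hint_comp : IntegrableOn (fun u => g (s * u - c * u⁻¹)) (Ioi 0) := by
    refine IntegrableOn.congr_fun (hint.bdd_smul s⁻¹ (φ := fun u => |s + c / u ^ 2|⁻¹) ?_ ?_)
      ?_ measurableSet_Ioi
    · exact (by fun_prop : Measurable fun u : ℝ => |s + c / u ^ 2|⁻¹).aestronglyMeasurable
    · filter_upwards [ae_restrict_mem measurableSet_Ioi] with u (hu : 0 < u)
      have hcu : 0 < c / u ^ 2 := by positivity
      rw [norm_inv, Real.norm_eq_abs, abs_abs, abs_of_pos (by positivity)]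
      exact inv_anti₀ hs (by linarith)
    · intro u hu
      simp only [Pi.smul_apply', smul_smul]
      rw [inv_mul_cancel₀ (by positivity), one_smul]
  have hsplit : ∫ u in Ioi 0, (c / u ^ 2) • g (s * u - c * u⁻¹) =
      (∫ x, g x) - s • ∫ u in Ioi 0, g (s * u - c * u⁻¹) := by
    rw [hsubst, ← integral_smul,
      ← integral_sub (g := fun u => s • g (s * u - c * u⁻¹)) hint (hint_comp.smul s)]
    refine setIntegral_congr_fun measurableSet_Ioi fun u hu => ?_
    rw [abs_of_pos (by positivity), add_smul, add_sub_cancel_left]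
  rw [integral_Ioi_div_sq_smul_comp_mul_sub_mul_inv heven hs hc, eq_sub_iff_add_eq, ← add_smul,
    ← two_mul] at hsplit
  rw [← hsplit, smul_smul, inv_mul_cancel₀ (by positivity), one_smul]

end

theorem integral_Ioi_exp_neg_pi_mul_sq_mul_sub_mul_inv {s c : ℝ} (hs : 0 < s) (hc : 0 ≤ c) :
    ∫ u in Ioi 0, exp (-π * (s * u - c * u⁻¹) ^ 2) = (2 * s)⁻¹ := by
  have := integral_Ioi_comp_mul_sub_mul_inv (g := fun x => exp (-π * x ^ 2))
    (integrable_exp_neg_mul_sq pi_pos) (fun x => by simp) hs hc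
  rwa [integral_gaussian, div_self pi_ne_zero, sqrt_one, smul_eq_mul, mul_one] at this

theorem integral_gaussian_quotient (c r₂ r₃ : ℝ) (hc : 0 ≤ c) (hr : 0 < r₂ ^ 2 + r₃) :
    ∫ y in Set.Ioi (0 : ℝ),
        y⁻¹ ^ 2 * Real.exp (-π * (c * y + r₂ * y⁻¹) ^ 2 - π * r₃ * y⁻¹ ^ 2) =
      (1 / 2) * (Real.sqrt (r₂ ^ 2 + r₃))⁻¹ *
        Real.exp (-2 * π * c * (Real.sqrt (r₂ ^ 2 + r₃) + r₂)) := by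
  have hs : 0 < √(r₂ ^ 2 + r₃) := sqrt_pos.2 hr
  have hs2 := sq_sqrt hr.le
  set s := √(r₂ ^ 2 + r₃)
  have hinv := integral_Ioi_comp_div
    (fun u => exp (-π * (c * u⁻¹ + r₂ * u) ^ 2 - π * r₃ * u ^ 2)) one_pos
  simp only [one_div, inv_inv, smul_eq_mul, ← inv_pow] at hinv
  have hexponent : ∀ u ∈ Ioi (0 : ℝ), exp (-π * (c * u⁻¹ + r₂ * u) ^ 2 - π * r₃ * u ^ 2) =
      exp (-2 * π * c * (s + r₂)) * exp (-π * (s * u - c * u⁻¹) ^ 2) := by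
    intro u (hu : 0 < u)
    rw [← exp_add]
    congr 1
    linear_combination (π * u ^ 2) * hs2 - (2 * π * c * (r₂ + s)) * mul_inv_cancel₀ (ne_of_gt hu)
  rw [hinv, setIntegral_congr_fun measurableSet_Ioi hexponent, integral_const_mul,
    integral_Ioi_exp_neg_pi_mul_sq_mul_sub_mul_inv hs hc]
  ring
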